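/- Let m ≥ 2 and R ≥ 0 be integers, k₀ := m·(R+1), k₁ := (m+1)·(R+1), let o be an integer and b ∈ {0,1}. If for some natural number L there exists an integer L' with k_b·L ≤ k_{1−b}·L' + o ≤ k_b·L + R, then for every integer j with 1 ≤ j ≤ m − 1 there is no integer L'' with k_b·(L+j) ≤ k_{1−b}·L'' + o ≤ k_b·(L+j) + R. -/

import Mathlib

/-! Write `K = R + 1`, so `{k_b, k_{1-b}} = {a K, c K}` with `{a, c} = {m, m + 1}`. Two hits
`k_b L ≤ k_{1-b} L' + o ≤ k_b L + R` and `k_b (L + j) ≤ k_{1-b} L'' + o ≤ k_b (L + j) + R`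
differ by the multiple `K (c (L'' - L') - a j)` of `K` of absolute value at most `R < K`, so
`c (L'' - L') = a j`. As `a` and `c` are coprime, `c ∣ j`, which is impossible for
`0 < j ≤ m - 1 < c`. -/

lemma mul_sub_eq_of_window_hits {a c K R o L₁ L₂ x₁ x₂ : ℤ} (hRK : R < K)
    (h₁ : a * K * L₁ ≤ c * K * x₁ + o) (h₁' : c * K * x₁ + o ≤ a * K * L₁ + R)
    (h₂ : a * K * L₂ ≤ c * K * x₂ + o) (h₂' : c * K * x₂ + o ≤ a * K * L₂ + R) :
    c * (x₂ - x₁) = a * (L₂ - L₁) := by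
  have hK : K ≠ 0 := by linarith
  have hzero : K * (c * (x₂ - x₁) - a * (L₂ - L₁)) = 0 := by
    refine Int.eq_zero_of_abs_lt_dvd (dvd_mul_right _ _) (abs_lt.mpr ⟨?_, ?_⟩) <;> linarith
  linarith [(mul_eq_zero.mp hzero).resolve_left hK]

lemma not_window_hits_of_isCoprime {a c K R o L x₁ x₂ j : ℤ} (hca : IsCoprime c a)
    (hj : 0 < j) (hjc : j < c) (hRK : R < K)
    (h₁ : a * K * L ≤ c * K * x₁ + o) (h₁' : c * K * x₁ + o ≤ a * K * L + R)
    (h₂ : a * K * (L + j) ≤ c * K * x₂ + o) (h₂' : c * K * x₂ + o ≤ a * K * (L + j) + R) :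
    False := by
  have heq := mul_sub_eq_of_window_hits hRK h₁ h₁' h₂ h₂'
  have hdvd : c ∣ a * j := ⟨x₂ - x₁, by rw [heq]; ring⟩
  exact (Int.le_of_dvd hj (hca.dvd_of_dvd_mul_left hdvd)).not_gt hjc

theorem window_hit_gap
    (m R : ℕ) (k : Fin 2 → ℤ)
    (hk0 : k 0 = (m : ℤ) * (R + 1)) (hk1 : k 1 = ((m : ℤ) + 1) * (R + 1))
    (o : ℤ) (b : Fin 2) (L : ℕ)
    (hhit : ∃ L' : ℤ,
      k b * (L : ℤ) ≤ k (1 - b) * L' + o ∧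
      k (1 - b) * L' + o ≤ k b * (L : ℤ) + (R : ℤ)) :
    ∀ j : ℤ, 1 ≤ j → j ≤ (m : ℤ) - 1 →
      ¬ ∃ L'' : ℤ,
        k b * ((L : ℤ) + j) ≤ k (1 - b) * L'' + o ∧
        k (1 - b) * L'' + o ≤ k b * ((L : ℤ) + j) + (R : ℤ) := by
  rintro j hj hjm ⟨L'', h₂, h₂'⟩
  obtain ⟨L', h₁, h₁'⟩ := hhit
  have hRK : (R : ℤ) < R + 1 := by omega
  fin_cases b
  · simp only [Fin.zero_eta, Fin.isValue, sub_zero, hk0, hk1] at h₁ h₁' h₂ h₂'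
    exact not_window_hits_of_isCoprime ⟨1, -1, by ring⟩ (by omega) (by omega) hRK h₁ h₁' h₂ h₂'
  · simp only [Fin.mk_one, Fin.isValue, sub_self, hk0, hk1] at h₁ h₁' h₂ h₂'
    exact not_window_hits_of_isCoprime ⟨-1, 1, by ring⟩ (by omega) (by omega) hRK h₁ h₁' h₂ h₂'
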